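/- arXiv:2304.02999 — 3 statements merged into one kernel-verified Lean document; each statement's English description precedes it below -/
import Mathlib

section
/- The average conditional min-entropy satisfies the chain rule: for finitely supported random variables X and Z, H̃∞(X | Z) ≥ H∞(X) − H₀(Z), where H₀(Z) is the logarithm of the size of the support of Z. -/
/-- Chain rule for average conditional min-entropy:
`H̃∞(X|Z) ≥ H∞(X) − H₀(Z)`, where `p x z` is the joint probability mass function of
`(X, Z)`, `H∞(X) = −log₂(max_x Pr[X=x])`,
`H̃∞(X|Z) = −log₂(Σ_z max_x p(x,z)) = −log₂(E_z[max_x Pr[X=x|Z=z]])`, and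
`H₀(Z)` is the log₂ of the size of the support of `Z`. -/
theorem avg_min_entropy_chain_rule {𝒳 𝒵 : Type} [Fintype 𝒳] [Fintype 𝒵] [Nonempty 𝒳]
    (p : 𝒳 → 𝒵 → ℝ) (hp0 : ∀ x z, 0 ≤ p x z) (hp1 : ∑ x, ∑ z, p x z = 1) :
    -Real.logb 2 (∑ z, ⨆ x, p x z) ≥
      (-Real.logb 2 (⨆ x, ∑ z, p x z)) -
        Real.logb 2 (Nat.card {z : 𝒵 // ∑ x, p x z ≠ 0}) := by
  set S := ⨆ x, ∑ z, p x z with hS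
  set A := ∑ z, ⨆ x, p x z with hA
  set N : ℕ := Nat.card {z : 𝒵 // ∑ x, p x z ≠ 0} with hN
  obtain ⟨x0, hx0⟩ : ∃ x, 0 < ∑ z, p x z := by
    by_contra h
    push_neg at h
    have : ∑ x, ∑ z, p x z ≤ 0 := Finset.sum_nonpos (fun x _ => h x)
    linarith
  have hSpos : 0 < S := by
    rw [hS]
    exact lt_of_lt_of_le hx0 (le_ciSup (Finite.bddAbove_range fun x => ∑ z, p x z) x0)
  have hApos : 0 < A := by
    have h1 : ∑ z, p x0 z ≤ A := by
      rw [hA]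
      exact Finset.sum_le_sum (fun z _ => le_ciSup (Finite.bddAbove_range fun x => p x z) x0)
    linarith
  have hNcard : (N : ℝ) = (Finset.univ.filter (fun z => ∑ x, p x z ≠ 0)).card := by
    simp [hN, Nat.card_eq_fintype_card, Fintype.card_subtype]
  have key : A ≤ N * S := by
    calc A ≤ ∑ z, (if ∑ x, p x z ≠ 0 then S else 0) := by
          apply Finset.sum_le_sum
          intro z _
          by_cases hz : ∑ x, p x z ≠ 0
          · rw [if_pos hz]
            apply ciSup_le
            intro x
            calc p x z ≤ ∑ z', p x z' :=
                  Finset.single_le_sum (fun z' _ => hp0 x z') (Finset.mem_univ z)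
              _ ≤ S := by
                  rw [hS]
                  exact le_ciSup (Finite.bddAbove_range fun x => ∑ z, p x z) x
          · rw [if_neg hz]
            push_neg at hz
            have hall : ∀ x, p x z = 0 := fun x =>
              (Finset.sum_eq_zero_iff_of_nonneg (fun x _ => hp0 x z)).mp hz x (Finset.mem_univ x)
            have : (⨆ x, p x z) = 0 := by simp [hall]
            exact le_of_eq this
      _ = N * S := by
          rw [Finset.sum_ite, Finset.sum_const, Finset.sum_const_zero, add_zero,
            nsmul_eq_mul, hNcard]
  have hNpos : (0 : ℝ) < N := by
    have : Nonempty {z : 𝒵 // ∑ x, p x z ≠ 0} := by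
      by_contra h
      simp only [not_nonempty_iff] at h
      have hz : ∀ z, ∑ x, p x z = 0 := fun z => by
        by_contra hc
        exact h.false ⟨z, hc⟩
      have : ∑ x, ∑ z, p x z = 0 := by rw [Finset.sum_comm]; simp [hz]
      linarith
    have := Nat.card_pos (α := {z : 𝒵 // ∑ x, p x z ≠ 0})
    exact_mod_cast this
  have hlog : Real.logb 2 A ≤ Real.logb 2 ((N : ℝ) * S) :=
    Real.logb_le_logb_of_le (by norm_num) hApos key
  rw [Real.logb_mul hNpos.ne' hSpos.ne'] at hlog
  linarith
end

section
/- Leftover Hash Lemma: Let X be a random variable on a finite set 𝒳 and Z a correlated random variable, with H̃∞(X|Z) ≥ k. Let H be drawn from a family of universal hash functions from 𝒳 to {0,1}^ℓ, independent of (X,Z), with ℓ ≤ k − 2 log(1/ε). Then the statistical distance between (H, H(X), Z) and (H, U, Z) is at most ε, where U is uniform on {0,1}^ℓ. -/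
/-- Leftover Hash Lemma.  `p` is the joint pmf of `(X, Z)`, `q` is the distribution of the
hash function index `h` (drawn independently of `(X, Z)`), and `f h : 𝒳 → {0,1}^ℓ` is the
hash family, assumed universal.  If `H̃∞(X|Z) ≥ k` (i.e. `Σ_z max_x p(x,z) ≤ 2^(−k)`) and
`ℓ ≤ k − 2·log₂(1/ε)`, then the statistical distance between `(H, H(X), Z)` and
`(H, U, Z)` (with `U` uniform on `{0,1}^ℓ`) is at most `ε`. -/
theorem leftover_hash_lemma {𝒳 𝒵 𝓗 : Type} [Fintype 𝒳] [Fintype 𝒵] [Fintype 𝓗]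
    [Nonempty 𝒳] [DecidableEq 𝒳]
    (ℓ : ℕ) (f : 𝓗 → 𝒳 → (Fin ℓ → Bool))
    (p : 𝒳 → 𝒵 → ℝ) (q : 𝓗 → ℝ) (k ε : ℝ)
    (hp0 : ∀ x z, 0 ≤ p x z) (hp1 : ∑ x, ∑ z, p x z = 1)
    (hq0 : ∀ h, 0 ≤ q h) (hq1 : ∑ h, q h = 1)
    (huniv : ∀ x x', x ≠ x' →
      ∑ h, q h * (if f h x = f h x' then (1 : ℝ) else 0) ≤ ((2 : ℝ) ^ ℓ)⁻¹)
    (hent : ∑ z, ⨆ x, p x z ≤ (2 : ℝ) ^ (-k))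
    (hε : 0 < ε)
    (hℓ : (ℓ : ℝ) ≤ k - 2 * Real.logb 2 (1 / ε)) :
    (1 / 2 : ℝ) * ∑ h, ∑ y : Fin ℓ → Bool, ∑ z,
        |q h * (∑ x, p x z * (if f h x = y then (1 : ℝ) else 0)) -
          q h * ((2 : ℝ) ^ ℓ)⁻¹ * ∑ x, p x z| ≤ ε := by
  classical
  obtain ⟨x0⟩ := ‹Nonempty 𝒳›
  set c : ℝ := ((2:ℝ)^ℓ)⁻¹ with hc
  have h2ℓ : (0:ℝ) < (2:ℝ)^ℓ := by positivity
  have hc0 : 0 ≤ c := by positivity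
  have hcmul : (2:ℝ)^ℓ * c = 1 := mul_inv_cancel₀ (ne_of_gt h2ℓ)
  set S : 𝓗 → 𝒵 → (Fin ℓ → Bool) → ℝ :=
    fun h z y => ∑ x, p x z * (if f h x = y then (1:ℝ) else 0) with hSdef
  set pz : 𝒵 → ℝ := fun z => ∑ x, p x z with hpzdef
  set M : 𝒵 → ℝ := fun z => ⨆ x, p x z with hMdef
  have hbdd : ∀ z, BddAbove (Set.range fun x => p x z) :=
    fun z => (Set.finite_range _).bddAbove
  have hpz0 : ∀ z, 0 ≤ pz z := fun z => Finset.sum_nonneg fun x _ => hp0 x z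
  have hpM : ∀ x z, p x z ≤ M z := fun x z => le_ciSup (hbdd z) x
  have hM0 : ∀ z, 0 ≤ M z := fun z => le_trans (hp0 x0 z) (hpM x0 z)
  have hpz1 : ∑ z, pz z = 1 := by rw [← hp1, Finset.sum_comm]
  have hcardY : (Fintype.card (Fin ℓ → Bool) : ℝ) = (2:ℝ)^ℓ := by
    simp [Fintype.card_fun]
  -- indicator sum
  have ind : ∀ a b : Fin ℓ → Bool,
      ∑ y : Fin ℓ → Bool, (if a = y then (1:ℝ) else 0) * (if b = y then (1:ℝ) else 0)
        = if a = b then (1:ℝ) else 0 := by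
    intro a b
    rw [Finset.sum_eq_single a]
    · simp [eq_comm]
    · intro y _ hy
      simp [Ne.symm hy]
    · simp
  have ind1 : ∀ a : Fin ℓ → Bool, ∑ y : Fin ℓ → Bool, (if a = y then (1:ℝ) else 0) = 1 := by
    intro a; simp
  -- Step A : collision expansion
  have stepA : ∀ h z, ∑ y : Fin ℓ → Bool, (S h z y)^2
      = ∑ x, ∑ x', p x z * p x' z * (if f h x = f h x' then (1:ℝ) else 0) := by
    intro h z
    calc ∑ y : Fin ℓ → Bool, (S h z y)^2
        = ∑ y : Fin ℓ → Bool, ∑ x, ∑ x', p x z * p x' z *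
            ((if f h x = y then (1:ℝ) else 0) * (if f h x' = y then (1:ℝ) else 0)) := by
          refine Finset.sum_congr rfl fun y _ => ?_
          rw [sq, hSdef, Finset.sum_mul_sum]
          exact Finset.sum_congr rfl fun x _ => Finset.sum_congr rfl fun x' _ => by ring
      _ = ∑ x, ∑ x', p x z * p x' z *
            ∑ y : Fin ℓ → Bool, (if f h x = y then (1:ℝ) else 0) * (if f h x' = y then (1:ℝ) else 0) := by
          rw [Finset.sum_comm]
          refine Finset.sum_congr rfl fun x _ => ?_
          rw [Finset.sum_comm]
          exact Finset.sum_congr rfl fun x' _ => (Finset.mul_sum _ _ _).symm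
      _ = _ := by
          refine Finset.sum_congr rfl fun x _ => Finset.sum_congr rfl fun x' _ => ?_
          rw [ind]
  -- sum of S over y
  have sumS : ∀ h z, ∑ y : Fin ℓ → Bool, S h z y = pz z := by
    intro h z
    rw [hSdef, hpzdef, Finset.sum_comm]
    refine Finset.sum_congr rfl fun x _ => ?_
    rw [← Finset.mul_sum, ind1, mul_one]
  -- expansion of squared deviation
  have expandB : ∀ h z, ∑ y : Fin ℓ → Bool, (S h z y - c * pz z)^2
      = (∑ y : Fin ℓ → Bool, (S h z y)^2) - c * (pz z)^2 := by
    intro h z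
    have e1 : ∀ y, (S h z y - c * pz z)^2
        = (S h z y)^2 - (2*c*pz z) * S h z y + c^2*(pz z)^2 := fun y => by ring
    simp_rw [e1]
    rw [Finset.sum_add_distrib, Finset.sum_sub_distrib, ← Finset.mul_sum, sumS,
      Finset.sum_const, Finset.card_univ, nsmul_eq_mul, hcardY]
    have h2 : (2:ℝ)^ℓ * (c^2*(pz z)^2) = ((2:ℝ)^ℓ * c) * (c * (pz z)^2) := by ring
    rw [h2, hcmul, one_mul]; ring
  -- Step B : second moment bound
  have stepB : ∀ z, ∑ h, q h * ∑ y : Fin ℓ → Bool, (S h z y - c * pz z)^2 ≤ M z * pz z := by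
    intro z
    have hsum2 : ∑ h, q h * ∑ y : Fin ℓ → Bool, (S h z y)^2
        = ∑ x, ∑ x', p x z * p x' z * ∑ h, q h * (if f h x = f h x' then (1:ℝ) else 0) := by
      simp_rw [stepA, Finset.mul_sum]
      rw [Finset.sum_comm]
      refine Finset.sum_congr rfl fun x _ => ?_
      rw [Finset.sum_comm]
      refine Finset.sum_congr rfl fun x' _ => ?_
      exact Finset.sum_congr rfl fun h _ => by ring
    have hr : ∀ x x', ∑ h, q h * (if f h x = f h x' then (1:ℝ) else 0)
        ≤ c + (if x = x' then 1 - c else 0) := by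
      intro x x'
      by_cases hxx : x = x'
      · subst hxx
        have e : (∑ h, q h * (if f h x = f h x then (1:ℝ) else 0)) = 1 := by simp [hq1]
        rw [e]
        split_ifs with hcond
        · linarith
        · simp at hcond
      · simpa [hxx] using huniv x x' hxx
    have hb1 : ∑ h, q h * ∑ y : Fin ℓ → Bool, (S h z y)^2
        ≤ c * (pz z)^2 + (1 - c) * ∑ x, (p x z)^2 := by
      rw [hsum2]
      calc ∑ x, ∑ x', p x z * p x' z * ∑ h, q h * (if f h x = f h x' then (1:ℝ) else 0)
          ≤ ∑ x, ∑ x', p x z * p x' z * (c + (if x = x' then 1 - c else 0)) := by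
            refine Finset.sum_le_sum fun x _ => Finset.sum_le_sum fun x' _ => ?_
            exact mul_le_mul_of_nonneg_left (hr x x') (mul_nonneg (hp0 x z) (hp0 x' z))
        _ = c * (pz z)^2 + (1 - c) * ∑ x, (p x z)^2 := by
            have e : ∀ x x' : 𝒳, p x z * p x' z * (c + (if x = x' then 1 - c else 0))
                = c * (p x z * p x' z) + (if x = x' then (1-c) * (p x z * p x' z) else 0) := by
              intro x x'
              by_cases hxx : x = x' <;> simp [hxx] <;> ring
            simp_rw [e, Finset.sum_add_distrib]
            congr 1
            · have e3 : (pz z)^2 = ∑ x, ∑ x', p x z * p x' z := by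
                rw [sq, hpzdef, Finset.sum_mul_sum]
              rw [e3, Finset.mul_sum]
              exact Finset.sum_congr rfl fun x _ => (Finset.mul_sum _ _ _).symm
            · have e2 : ∀ x : 𝒳, (∑ x', if x = x' then (1-c) * (p x z * p x' z) else 0)
                  = (1-c) * (p x z)^2 := by
                intro x
                rw [Finset.sum_ite_eq]
                simp only [Finset.mem_univ, if_true, sq]
              simp_rw [e2]
              rw [Finset.mul_sum]
    have hsq : ∑ x, (p x z)^2 ≤ M z * pz z := by
      rw [hpzdef, Finset.mul_sum]
      refine Finset.sum_le_sum fun x _ => ?_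
      rw [sq]
      exact mul_le_mul_of_nonneg_right (hpM x z) (hp0 x z)
    have hsq0 : 0 ≤ ∑ x, (p x z)^2 := Finset.sum_nonneg fun x _ => sq_nonneg _
    calc ∑ h, q h * ∑ y : Fin ℓ → Bool, (S h z y - c * pz z)^2
        = (∑ h, q h * ∑ y : Fin ℓ → Bool, (S h z y)^2) - c * (pz z)^2 := by
          simp_rw [expandB, mul_sub, Finset.sum_sub_distrib, ← Finset.sum_mul, hq1, one_mul]
      _ ≤ (c * (pz z)^2 + (1 - c) * ∑ x, (p x z)^2) - c * (pz z)^2 := by linarith [hb1]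
      _ = (1 - c) * ∑ x, (p x z)^2 := by ring
      _ ≤ ∑ x, (p x z)^2 := by nlinarith [hsq0, hc0]
      _ ≤ M z * pz z := hsq
  -- Step C : Cauchy-Schwarz per z
  have stepC : ∀ z, ∑ h, ∑ y : Fin ℓ → Bool, q h * |S h z y - c * pz z|
      ≤ Real.sqrt ((2:ℝ)^ℓ) * Real.sqrt (M z * pz z) := by
    intro z
    have key : ∑ hy : 𝓗 × (Fin ℓ → Bool), q hy.1 * |S hy.1 z hy.2 - c * pz z|
        ≤ Real.sqrt (∑ hy : 𝓗 × (Fin ℓ → Bool), q hy.1) *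
          Real.sqrt (∑ hy : 𝓗 × (Fin ℓ → Bool), q hy.1 * (S hy.1 z hy.2 - c * pz z)^2) := by
      have := Real.sum_mul_le_sqrt_mul_sqrt Finset.univ
        (fun hy : 𝓗 × (Fin ℓ → Bool) => Real.sqrt (q hy.1))
        (fun hy : 𝓗 × (Fin ℓ → Bool) => Real.sqrt (q hy.1) * |S hy.1 z hy.2 - c * pz z|)
      have e1 : ∀ hy : 𝓗 × (Fin ℓ → Bool),
          Real.sqrt (q hy.1) * (Real.sqrt (q hy.1) * |S hy.1 z hy.2 - c * pz z|)
            = q hy.1 * |S hy.1 z hy.2 - c * pz z| := by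
        intro hy
        rw [← mul_assoc, Real.mul_self_sqrt (hq0 hy.1)]
      have e2 : ∀ hy : 𝓗 × (Fin ℓ → Bool), (Real.sqrt (q hy.1))^2 = q hy.1 :=
        fun hy => Real.sq_sqrt (hq0 hy.1)
      have e3 : ∀ hy : 𝓗 × (Fin ℓ → Bool),
          (Real.sqrt (q hy.1) * |S hy.1 z hy.2 - c * pz z|)^2
            = q hy.1 * (S hy.1 z hy.2 - c * pz z)^2 := by
        intro hy
        rw [mul_pow, Real.sq_sqrt (hq0 hy.1), sq_abs]
      simp_rw [e1, e2, e3] at this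
      exact this
    have eq1 : ∑ hy : 𝓗 × (Fin ℓ → Bool), q hy.1 * |S hy.1 z hy.2 - c * pz z|
        = ∑ h, ∑ y : Fin ℓ → Bool, q h * |S h z y - c * pz z| := Fintype.sum_prod_type _
    have eq2 : ∑ hy : 𝓗 × (Fin ℓ → Bool), q hy.1 = (2:ℝ)^ℓ := by
      rw [Fintype.sum_prod_type]
      simp only [Finset.sum_const, Finset.card_univ, nsmul_eq_mul]
      rw [← Finset.mul_sum, hq1, mul_one, hcardY]
    have eq3 : ∑ hy : 𝓗 × (Fin ℓ → Bool), q hy.1 * (S hy.1 z hy.2 - c * pz z)^2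
        = ∑ h, q h * ∑ y : Fin ℓ → Bool, (S h z y - c * pz z)^2 := by
      rw [Fintype.sum_prod_type]
      exact Finset.sum_congr rfl fun h _ =>
        (Finset.mul_sum Finset.univ (fun y => (S h z y - c * pz z)^2) (q h)).symm
    rw [eq1, eq2, eq3] at key
    refine key.trans ?_
    exact mul_le_mul_of_nonneg_left (Real.sqrt_le_sqrt (stepB z)) (Real.sqrt_nonneg _)
  -- Step D : sum over z
  have stepD : ∑ z, Real.sqrt (M z) * Real.sqrt (pz z) ≤ Real.sqrt ((2:ℝ)^(-k)) := by
    have := Real.sum_sqrt_mul_sqrt_le Finset.univ (f := M) (g := pz) (fun z => hM0 z) (fun z => hpz0 z)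
    refine this.trans ?_
    rw [hpz1, Real.sqrt_one, mul_one]
    exact Real.sqrt_le_sqrt hent
  -- Rewrite goal LHS
  have goalEq : ∑ h, ∑ y : Fin ℓ → Bool, ∑ z,
      |q h * (∑ x, p x z * (if f h x = y then (1:ℝ) else 0)) - q h * c * ∑ x, p x z|
      = ∑ z, ∑ h, ∑ y : Fin ℓ → Bool, q h * |S h z y - c * pz z| := by
    calc ∑ h, ∑ y : Fin ℓ → Bool, ∑ z,
        |q h * (∑ x, p x z * (if f h x = y then (1:ℝ) else 0)) - q h * c * ∑ x, p x z|
        = ∑ h, ∑ z, ∑ y : Fin ℓ → Bool,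
            |q h * (∑ x, p x z * (if f h x = y then (1:ℝ) else 0)) - q h * c * ∑ x, p x z| :=
          Finset.sum_congr rfl fun h _ => Finset.sum_comm
      _ = ∑ z, ∑ h, ∑ y : Fin ℓ → Bool,
            |q h * (∑ x, p x z * (if f h x = y then (1:ℝ) else 0)) - q h * c * ∑ x, p x z| :=
          Finset.sum_comm
      _ = ∑ z, ∑ h, ∑ y : Fin ℓ → Bool, q h * |S h z y - c * pz z| := by
          refine Finset.sum_congr rfl fun z _ => Finset.sum_congr rfl fun h _ =>
            Finset.sum_congr rfl fun y _ => ?_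
          show |q h * S h z y - q h * c * pz z| = q h * |S h z y - c * pz z|
          have e : q h * S h z y - q h * c * pz z = q h * (S h z y - c * pz z) := by ring
          rw [e, abs_mul, abs_of_nonneg (hq0 h)]
  have total : ∑ z, ∑ h, ∑ y : Fin ℓ → Bool, q h * |S h z y - c * pz z|
      ≤ Real.sqrt ((2:ℝ)^ℓ) * Real.sqrt ((2:ℝ)^(-k)) := by
    calc ∑ z, ∑ h, ∑ y : Fin ℓ → Bool, q h * |S h z y - c * pz z|
        ≤ ∑ z, Real.sqrt ((2:ℝ)^ℓ) * Real.sqrt (M z * pz z) :=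
          Finset.sum_le_sum fun z _ => stepC z
      _ = Real.sqrt ((2:ℝ)^ℓ) * ∑ z, Real.sqrt (M z) * Real.sqrt (pz z) := by
          rw [Finset.mul_sum]
          exact Finset.sum_congr rfl fun z _ => by rw [Real.sqrt_mul (hM0 z)]
      _ ≤ Real.sqrt ((2:ℝ)^ℓ) * Real.sqrt ((2:ℝ)^(-k)) :=
          mul_le_mul_of_nonneg_left stepD (Real.sqrt_nonneg _)
  -- final numeric bound
  have hpow : Real.sqrt ((2:ℝ)^ℓ) * Real.sqrt ((2:ℝ)^(-k)) ≤ ε := by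
    have hl2 : (2:ℝ)^ℓ = (2:ℝ) ^ ((ℓ:ℝ)) := (Real.rpow_natCast 2 ℓ).symm
    have h1 : Real.sqrt ((2:ℝ)^ℓ) * Real.sqrt ((2:ℝ)^(-k))
        = Real.sqrt ((2:ℝ) ^ (((ℓ:ℝ) + -k) : ℝ)) := by
      rw [← Real.sqrt_mul (le_of_lt h2ℓ), hl2,
        ← Real.rpow_add (by norm_num : (0:ℝ) < 2)]
    rw [h1, Real.sqrt_eq_rpow, ← Real.rpow_mul (by norm_num : (0:ℝ) ≤ 2)]
    have hlog : Real.logb 2 (1/ε) = - Real.logb 2 ε := by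
      rw [one_div, Real.logb_inv]
    have hexp : ((ℓ:ℝ) + -k) * ((1:ℝ)/2) ≤ Real.logb 2 ε := by
      rw [hlog] at hℓ; linarith
    calc (2:ℝ) ^ ((((ℓ:ℝ) + -k) * ((1:ℝ)/2)) : ℝ)
        ≤ (2:ℝ) ^ (Real.logb 2 ε) :=
          Real.rpow_le_rpow_of_exponent_le (by norm_num) hexp
      _ = ε := Real.rpow_logb (by norm_num) (by norm_num) hε
  rw [goalEq]
  have := total.trans hpow
  linarith [this]
end

section
/- Let σ₀, σ₁ ∈ {0,1}^n be fixed bit strings and d₀ ∈ {0,1}. Applying the (n+1)-qubit Hadamard transform H^{⊗(n+1)} to the state |Ψ⟩ = (|0,σ₀⟩ + (−1)^{d₀}|1,σ₁⟩)/√2 yields a state whose computational-basis measurement outcome (d₁, d₂) ∈ {0,1} × {0,1}^n is uniformly distributed over the set {(d₁,d₂) : d₁ ⊕ (d₂ · (σ₀ ⊕ σ₁)) = d₀}, where d₂ · s denotes the inner product mod 2. -/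
/-- The `m`-qubit Hadamard transform applied to a state vector `ψ` on `{0,1}^m`:
`(H^{⊗m} ψ)(y) = 2^{−m/2} Σ_x (−1)^{x·y} ψ(x)`. -/
noncomputable def hadamard {m : ℕ} (ψ : (Fin m → ZMod 2) → ℂ) (y : Fin m → ZMod 2) : ℂ :=
  ((Real.sqrt (2 ^ m) : ℝ) : ℂ)⁻¹ * ∑ x, (-1 : ℂ) ^ (∑ i, x i * y i).val * ψ x

lemma chi_add (a b : ZMod 2) : ((-1:ℂ))^(a+b).val = (-1)^a.val * (-1)^b.val := by
  match a, b with
  | 0, 0 => simp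
  | 0, 1 => simp
  | 1, 0 => simp
  | 1, 1 => simp [show ((1:ZMod 2)+1).val = 0 from rfl, show ZMod.val (1:ZMod 2) = 1 from rfl]

lemma chi_ne (a b : ZMod 2) (h : a ≠ b) : ((-1:ℂ))^a.val = -(-1)^b.val := by
  match a, b with
  | 0, 0 => simp_all
  | 0, 1 => simp_all [show ZMod.val (1:ZMod 2) = 1 from rfl]
  | 1, 0 => simp_all [show ZMod.val (1:ZMod 2) = 1 from rfl]
  | 1, 1 => simp_all

lemma zmod2_iff : ∀ a b c e : ZMod 2, (c + (a + b) = e) ↔ (a = c + b + e) := by decide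

lemma sum_pair {α : Type*} [Fintype α] [DecidableEq α] {A B : α} (h : A ≠ B)
    (g : α → ℂ) (u v : ℂ) :
    ∑ x, g x * (if x = A then u else if x = B then v else 0) = g A * u + g B * v := by
  have key : ∀ x, g x * (if x = A then u else if x = B then v else 0)
      = (if x = A then g A * u else 0) + (if x = B then g B * v else 0) := by
    intro x
    by_cases h1 : x = A
    · subst h1; simp [h]
    · by_cases h2 : x = B
      · subst h2; simp [Ne.symm h, h1]
      · simp [h1, h2]
  simp only [key, Finset.sum_add_distrib, Finset.sum_ite_eq', Finset.mem_univ, if_true]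


/-- Measuring `H^{⊗(n+1)} |Ψ⟩` in the computational basis, where
`|Ψ⟩ = (|0,σ₀⟩ + (−1)^{d₀}|1,σ₁⟩)/√2`, yields an outcome `(d₁, d₂)` uniformly distributed
over the set `{(d₁,d₂) : d₁ ⊕ d₂·(σ₀ ⊕ σ₁) = d₀}` (which has `2^n` elements): the outcome
probability is `2^{−n}` if `d₁ + Σᵢ d₂ᵢ(σ₀ᵢ + σ₁ᵢ) = d₀` and `0` otherwise. -/
theorem hadamard_signature_state_measurement {n : ℕ} (σ₀ σ₁ : Fin n → ZMod 2) (d₀ : ZMod 2)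
    (Ψ : (Fin (n + 1) → ZMod 2) → ℂ)
    (hΨ : Ψ = fun x => if x = Fin.cons 0 σ₀ then ((Real.sqrt 2 : ℝ) : ℂ)⁻¹
      else if x = Fin.cons 1 σ₁ then (-1 : ℂ) ^ d₀.val * ((Real.sqrt 2 : ℝ) : ℂ)⁻¹ else 0)
    (d : Fin (n + 1) → ZMod 2) :
    ‖hadamard Ψ d‖ ^ 2 =
      if d 0 + ∑ i : Fin n, d i.succ * (σ₀ i + σ₁ i) = d₀ then ((2 : ℝ) ^ n)⁻¹ else 0 := by
  subst hΨ
  have hAB : (Fin.cons 0 σ₀ : Fin (n+1) → ZMod 2) ≠ Fin.cons 1 σ₁ := by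
    intro h
    have h0 := congrFun h 0
    simp only [Fin.cons_zero] at h0
    exact zero_ne_one h0
  unfold hadamard
  rw [sum_pair hAB]
  set S : ZMod 2 := ∑ i : Fin n, σ₀ i * d i.succ with hS
  set T : ZMod 2 := ∑ i : Fin n, σ₁ i * d i.succ with hT
  have eA : (∑ i, (Fin.cons 0 σ₀ : Fin (n+1) → ZMod 2) i * d i) = S := by
    rw [Fin.sum_univ_succ]; simp [hS]
  have eB : (∑ i, (Fin.cons 1 σ₁ : Fin (n+1) → ZMod 2) i * d i) = d 0 + T := by
    rw [Fin.sum_univ_succ]; simp [hT]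
  have hcond : (d 0 + ∑ i : Fin n, d i.succ * (σ₀ i + σ₁ i) = d₀) ↔ S = d 0 + T + d₀ := by
    have : (∑ i : Fin n, d i.succ * (σ₀ i + σ₁ i)) = S + T := by
      rw [hS, hT, ← Finset.sum_add_distrib]
      exact Finset.sum_congr rfl fun i _ => by ring
    rw [this]
    exact zmod2_iff S T (d 0) d₀
  rw [eA, eB]
  have hs2 : (0:ℝ) < Real.sqrt 2 := Real.sqrt_pos.mpr (by norm_num)
  have hsn : (0:ℝ) < Real.sqrt (2 ^ (n+1)) := Real.sqrt_pos.mpr (by positivity)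
  by_cases hc : S = d 0 + T + d₀
  · rw [if_pos (hcond.mpr hc), hc, chi_add (d 0 + T) d₀]
    have : ((Real.sqrt (2 ^ (n+1)) : ℝ) : ℂ)⁻¹ *
        ((-1:ℂ) ^ (d 0 + T).val * (-1) ^ d₀.val * ((Real.sqrt 2 : ℝ) : ℂ)⁻¹
          + (-1:ℂ) ^ (d 0 + T).val * ((-1:ℂ) ^ d₀.val * ((Real.sqrt 2 : ℝ) : ℂ)⁻¹))
        = (-1:ℂ) ^ (d 0 + T).val * (-1) ^ d₀.val *
          (((Real.sqrt (2 ^ (n+1)) : ℝ) : ℂ)⁻¹ * ((Real.sqrt 2 : ℝ) : ℂ)⁻¹ * 2) := by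
      ring
    rw [this, norm_mul, norm_mul, norm_pow, norm_pow, norm_neg, norm_one, one_pow, one_pow,
      one_mul]
    have : ‖((Real.sqrt (2 ^ (n+1)) : ℝ) : ℂ)⁻¹ * ((Real.sqrt 2 : ℝ) : ℂ)⁻¹ * 2‖
        = (Real.sqrt (2 ^ (n+1)))⁻¹ * (Real.sqrt 2)⁻¹ * 2 := by
      rw [norm_mul, norm_mul, norm_inv, norm_inv, Complex.norm_real, Complex.norm_real]
      simp [abs_of_nonneg (Real.sqrt_nonneg _), Real.norm_eq_abs]
    rw [this]
    have h1 : (Real.sqrt (2 ^ (n+1)))^2 = 2 ^ (n+1) := Real.sq_sqrt (by positivity)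
    have h2 : (Real.sqrt 2)^2 = 2 := Real.sq_sqrt (by norm_num)
    field_simp
    nlinarith [h1, h2, pow_succ (2:ℝ) n]
  · rw [if_neg (fun h => hc (hcond.mp h)), chi_ne _ _ hc]
    have : (-(-1:ℂ) ^ (d 0 + T + d₀).val) * ((Real.sqrt 2 : ℝ) : ℂ)⁻¹
        + (-1:ℂ) ^ (d 0 + T).val * ((-1:ℂ) ^ d₀.val * ((Real.sqrt 2 : ℝ) : ℂ)⁻¹) = 0 := by
      rw [chi_add (d 0 + T) d₀]; ring
    rw [this, mul_zero, norm_zero]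
    norm_num
end
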